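/- Suppose for a given λ with λ_i > 0 for all i, X is an optimal solution of LP(λ), (α, p) is an optimal solution of DLP(λ), and every agent i satisfies Σ_j p_j x_{ij} = m_i (the budget constraint with equality). Then (X, p) is a market equilibrium: each x_i optimizes agent i's delay subject to its covering constraints and budget constraint at prices p, the allocation is supply respecting, and every good j with Σ_i x_{ij} < 1 has p_j = 0. -/

import Mathlib

lemma aux_eps {L K c : ℝ} (h : ∀ ε : ℝ, 0 < ε → L + ε * K < c) : L ≤ c := by
  have ht : Filter.Tendsto (fun ε : ℝ => L + ε * K) (nhdsWithin 0 (Set.Ioi 0)) (nhds L) := by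
    have h0 : Filter.Tendsto (fun ε : ℝ => L + ε * K) (nhds 0) (nhds (L + 0 * K)) :=
      Filter.Tendsto.add tendsto_const_nhds (Filter.Tendsto.mul_const _ Filter.tendsto_id)
    simpa using h0.mono_left nhdsWithin_le_nhds
  exact le_of_tendsto ht (Filter.eventually_of_mem self_mem_nhdsWithin
    (fun ε hε => (h ε hε).le))

lemma aux_ray {Q K c : ℝ} (h : ∀ t : ℝ, 0 < t → Q + t * K ≤ c) : K ≤ 0 := by
  by_contra h'
  push_neg at h'
  have ht : (0:ℝ) < (|c - Q| + 1) / K := by positivity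
  have h1 := h _ ht
  have h2 : (|c - Q| + 1) / K * K = |c - Q| + 1 := div_mul_cancel₀ _ (ne_of_gt h')
  have h3 : c - Q ≤ |c - Q| := le_abs_self _
  linarith

lemma aux_neg {Q γ c V : ℝ} (h : ∀ v : ℝ, v < V → Q + γ * v < c) : 0 ≤ γ := by
  by_contra h'
  push_neg at h'
  have hne : γ ≠ 0 := ne_of_lt h'
  set v := min (V - 1) ((c - Q) / γ - 1) with hv
  have hvV : v < V := lt_of_le_of_lt (min_le_left _ _) (by linarith)
  have hv2 : v ≤ (c - Q) / γ - 1 := min_le_right _ _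
  have h1 := h v hvV
  have h2 : γ * ((c - Q) / γ - 1) ≤ γ * v := mul_le_mul_of_nonpos_left hv2 h'.le
  have h3 : γ * ((c - Q) / γ - 1) = (c - Q) - γ := by
    rw [mul_sub, mul_div_cancel₀ _ hne, mul_one]
  linarith

lemma combo_lt {a b g₁ g₂ u₁ u₂ : ℝ} (ha : 0 ≤ a) (hb : 0 ≤ b) (hab : a + b = 1)
    (h₁ : g₁ < u₁) (h₂ : g₂ < u₂) : a * g₁ + b * g₂ < a * u₁ + b * u₂ := by
  rcases eq_or_lt_of_le ha with h | h
  · have hb1 : b = 1 := by linarith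
    rw [← h, hb1]; simpa using h₂
  · have k1 := mul_lt_mul_of_pos_left h₁ h
    have k2 := mul_le_mul_of_nonneg_left h₂.le hb
    linarith

lemma sum_swap_mul {G C : Type*} [Fintype G] [Fintype C] (u : C → ℝ) (v : G → ℝ)
    (w : G → C → ℝ) :
    ∑ k, u k * ∑ j, w j k * v j = ∑ j, v j * ∑ k, w j k * u k := by
  calc ∑ k, u k * ∑ j, w j k * v j = ∑ k, ∑ j, u k * (w j k * v j) := by
        exact Finset.sum_congr rfl fun k _ => Finset.mul_sum _ _ _
    _ = ∑ j, ∑ k, u k * (w j k * v j) := Finset.sum_comm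
    _ = ∑ j, v j * ∑ k, w j k * u k := by
        refine Finset.sum_congr rfl fun j _ => ?_
        rw [Finset.mul_sum]
        exact Finset.sum_congr rfl fun k _ => by ring

lemma lagrange {σ ι : Type*} [Fintype σ] [Fintype ι]
    (Gm : ι → σ → ℝ) (gc : ι → ℝ) (cv : σ → ℝ) (Dv : ℝ)
    (hD : ∀ z : σ → ℝ, (∀ s, 0 ≤ z s) → (∀ i, (∑ s, Gm i s * z s) + gc i ≤ 0) →
      ∑ s, cv s * z s ≤ Dv)
    (z₀ : σ → ℝ) (hz₀ : ∀ s, 0 ≤ z₀ s) (hz₀g : ∀ i, (∑ s, Gm i s * z₀ s) + gc i < 0) :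
    ∃ Y : ι → ℝ, (∀ i, 0 ≤ Y i) ∧ ∀ z : σ → ℝ, (∀ s, 0 ≤ z s) →
      (∑ s, cv s * z s) - ∑ i, Y i * ((∑ s, Gm i s * z s) + gc i) ≤ Dv := by
  classical
  set g : ι → (σ → ℝ) → ℝ := fun i z => (∑ s, Gm i s * z s) + gc i with hgdef
  set f : (σ → ℝ) → ℝ := fun z => ∑ s, cv s * z s with hfdef
  -- affinity of g and linearity of f on convex combinations
  have hgcomb : ∀ (a b : ℝ), a + b = 1 → ∀ (z₁ z₂ : σ → ℝ) (i : ι),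
      g i (a • z₁ + b • z₂) = a * g i z₁ + b * g i z₂ := by
    intro a b hab z₁ z₂ i
    simp only [hgdef, Pi.add_apply, Pi.smul_apply, smul_eq_mul]
    have hs : ∑ s, Gm i s * (a * z₁ s + b * z₂ s)
        = a * ∑ s, Gm i s * z₁ s + b * ∑ s, Gm i s * z₂ s := by
      rw [Finset.mul_sum, Finset.mul_sum, ← Finset.sum_add_distrib]
      exact Finset.sum_congr rfl fun s _ => by ring
    rw [hs]
    linear_combination gc i * hab.symm
  have hfcomb : ∀ (a b : ℝ) (z₁ z₂ : σ → ℝ),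
      f (a • z₁ + b • z₂) = a * f z₁ + b * f z₂ := by
    intro a b z₁ z₂
    simp only [hfdef, Pi.add_apply, Pi.smul_apply, smul_eq_mul]
    rw [Finset.mul_sum, Finset.mul_sum, ← Finset.sum_add_distrib]
    exact Finset.sum_congr rfl fun s _ => by ring
  set M : Set ((ι → ℝ) × ℝ) :=
    {w | ∃ z : σ → ℝ, (∀ s, 0 ≤ z s) ∧ (∀ i, g i z < w.1 i) ∧ w.2 < f z} with hMdef
  set T : Set ((ι → ℝ) × ℝ) := {w | w.1 = 0 ∧ Dv ≤ w.2} with hTdef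
  have hMopen : IsOpen M := by
    have : M = ⋃ (z : σ → ℝ), ⋃ (_ : ∀ s, 0 ≤ z s),
        ((⋂ i, {w : (ι → ℝ) × ℝ | g i z < w.1 i}) ∩ {w : (ι → ℝ) × ℝ | w.2 < f z}) := by
      ext w
      simp only [hMdef, Set.mem_setOf_eq, Set.mem_iUnion, Set.mem_inter_iff, Set.mem_iInter,
        Set.mem_setOf_eq]
      tauto
    rw [this]
    refine isOpen_iUnion fun z => isOpen_iUnion fun _ => IsOpen.inter ?_ ?_
    · exact isOpen_iInter_of_finite fun i =>
        isOpen_lt continuous_const ((continuous_apply i).comp continuous_fst)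
    · exact isOpen_lt continuous_snd continuous_const
  have hMconv : Convex ℝ M := by
    rintro w₁ ⟨z₁, hz₁, hg₁, hf₁⟩ w₂ ⟨z₂, hz₂, hg₂, hf₂⟩ a b ha hb hab
    refine ⟨a • z₁ + b • z₂, fun s => ?_, fun i => ?_, ?_⟩
    · have : (a • z₁ + b • z₂) s = a * z₁ s + b * z₂ s := rfl
      rw [this]
      exact add_nonneg (mul_nonneg ha (hz₁ s)) (mul_nonneg hb (hz₂ s))
    · rw [hgcomb a b hab z₁ z₂ i]
      have : (a • w₁ + b • w₂).1 i = a * w₁.1 i + b * w₂.1 i := rfl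
      rw [this]
      exact combo_lt ha hb hab (hg₁ i) (hg₂ i)
    · rw [hfcomb a b z₁ z₂]
      have : (a • w₁ + b • w₂).2 = a * w₁.2 + b * w₂.2 := rfl
      rw [this]
      exact combo_lt ha hb hab hf₁ hf₂
  have hTconv : Convex ℝ T := by
    rintro w₁ ⟨hw₁, hv₁⟩ w₂ ⟨hw₂, hv₂⟩ a b ha hb hab
    constructor
    · have : (a • w₁ + b • w₂).1 = a • w₁.1 + b • w₂.1 := rfl
      rw [this, hw₁, hw₂]; simp
    · have : (a • w₁ + b • w₂).2 = a * w₁.2 + b * w₂.2 := rfl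
      rw [this]
      calc Dv = a * Dv + b * Dv := by linear_combination Dv * hab.symm
        _ ≤ a * w₁.2 + b * w₂.2 :=
          add_le_add (mul_le_mul_of_nonneg_left hv₁ ha) (mul_le_mul_of_nonneg_left hv₂ hb)
  have hdisj : Disjoint M T := by
    rw [Set.disjoint_left]
    rintro w ⟨z, hz, hgz, hfz⟩ ⟨hw1, hw2⟩
    have h1 : ∀ i, g i z ≤ 0 := fun i => by
      have := hgz i; rw [hw1] at this; simpa using this.le
    have h2 : f z ≤ Dv := hD z hz h1
    linarith
  obtain ⟨φ, c, hφM, hφT⟩ := geometric_hahn_banach_open hMconv hMopen hTconv hdisj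
  set Y : ι → ℝ := fun i => φ (Pi.single i 1, 0) with hYdef
  set γ : ℝ := φ (0, 1) with hγdef
  have hdecomp : ∀ (u : ι → ℝ) (v : ℝ), φ (u, v) = (∑ i, Y i * u i) + γ * v := by
    intro u v
    have hsplit : ((u, v) : (ι → ℝ) × ℝ) = (u, 0) + (0, v) := by
      apply Prod.ext <;> simp
    have h0v : ((0, v) : (ι → ℝ) × ℝ) = v • ((0 : ι → ℝ), (1:ℝ)) := by
      apply Prod.ext <;> simp
    have hu0 : ((u, (0:ℝ)) : (ι → ℝ) × ℝ) = ∑ i, u i • ((Pi.single i 1 : ι → ℝ), (0:ℝ)) := by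
      apply Prod.ext
      · rw [Prod.fst_sum]
        calc u = ∑ i, Pi.single i (u i) := (Finset.univ_sum_single u).symm
          _ = ∑ i, (u i • ((Pi.single i 1 : ι → ℝ), (0:ℝ))).1 := by
              refine Finset.sum_congr rfl fun i _ => ?_
              simp [← Pi.single_smul]
      · rw [Prod.snd_sum]
        simp
    rw [hsplit, map_add, hu0, h0v, map_smul, map_sum]
    simp only [map_smul, smul_eq_mul]
    rw [mul_comm v]
    congr 1
    exact Finset.sum_congr rfl fun i _ => mul_comm _ _
  -- the master inequality
  have hmaster : ∀ z : σ → ℝ, (∀ s, 0 ≤ z s) → ∀ (u : ι → ℝ) (v : ℝ),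
      (∀ i, g i z < u i) → v < f z → (∑ i, Y i * u i) + γ * v < c := by
    intro z hz u v hu hv
    have := hφM (u, v) ⟨z, hz, hu, hv⟩
    rwa [hdecomp] at this
  have hT0 : c ≤ γ * Dv := by
    have := hφT (0, Dv) ⟨rfl, le_rfl⟩
    rw [hdecomp] at this
    simpa using this
  -- limit form of the master inequality
  have hlimit : ∀ z : σ → ℝ, (∀ s, 0 ≤ z s) →
      (∑ i, Y i * g i z) + γ * f z ≤ c := by
    intro z hz
    apply aux_eps (K := (∑ i, Y i) - γ)
    intro ε hε
    have h1 := hmaster z hz (fun i => g i z + ε) (f z - ε)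
      (fun i => by show g i z < g i z + ε; linarith) (by show f z - ε < f z; linarith)
    have h2 : ∑ i, Y i * (g i z + ε) = (∑ i, Y i * g i z) + (∑ i, Y i) * ε := by
      rw [Finset.sum_mul, ← Finset.sum_add_distrib]
      exact Finset.sum_congr rfl fun i _ => by ring
    rw [h2] at h1
    linarith
  have hγ0 : 0 ≤ γ := by
    apply aux_neg (Q := ∑ i, Y i * (g i z₀ + 1)) (V := f z₀) (c := c)
    intro v hv
    exact hmaster z₀ hz₀ (fun i => g i z₀ + 1) v
      (fun i => by show g i z₀ < g i z₀ + 1; linarith) hv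
  have hYneg : ∀ i₀, Y i₀ ≤ 0 := by
    intro i₀
    apply aux_ray (Q := (∑ i, Y i * (g i z₀ + 1)) + γ * (f z₀ - 1)) (c := c)
    intro t ht
    have h1 := hmaster z₀ hz₀ (fun i => g i z₀ + 1 + (if i = i₀ then t else 0)) (f z₀ - 1)
      (fun i => by
        show g i z₀ < g i z₀ + 1 + (if i = i₀ then t else 0)
        split_ifs with h <;> linarith)
      (by show f z₀ - 1 < f z₀; linarith)
    have h2 : ∑ i, Y i * (g i z₀ + 1 + (if i = i₀ then t else 0))
        = (∑ i, Y i * (g i z₀ + 1)) + t * Y i₀ := by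
      have : ∀ i, Y i * (g i z₀ + 1 + (if i = i₀ then t else 0))
          = Y i * (g i z₀ + 1) + (if i = i₀ then Y i * t else 0) := by
        intro i; split_ifs <;> ring
      rw [Finset.sum_congr rfl fun i _ => this i, Finset.sum_add_distrib,
        Finset.sum_ite_eq' Finset.univ i₀ (fun i => Y i * t)]
      simp [mul_comm]
    rw [h2] at h1
    linarith
  -- γ must be positive thanks to the Slater point
  have hγpos : 0 < γ := by
    rcases hγ0.eq_or_lt with h | h
    · exfalso
      have hc0 : c ≤ 0 := by rw [← h] at hT0; linarith
      set S := ∑ i, Y i * g i z₀ with hSdef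
      set Tt := ∑ i, Y i with hTtdef
      have hstep : ∀ ε : ℝ, 0 < ε → S + Tt * ε < c := by
        intro ε hε
        have h1 := hmaster z₀ hz₀ (fun i => g i z₀ + ε) (f z₀ - ε)
          (fun i => by show g i z₀ < g i z₀ + ε; linarith)
          (by show f z₀ - ε < f z₀; linarith)
        have h2 : ∑ i, Y i * (g i z₀ + ε) = S + Tt * ε := by
          rw [hSdef, hTtdef, Finset.sum_mul, ← Finset.sum_add_distrib]
          exact Finset.sum_congr rfl fun i _ => by ring
        rw [h2] at h1
        rw [← h] at h1
        linarith
      -- each term Y i * g i z₀ ≥ 0 since Y i ≤ 0, g < 0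
      have hgz₀ : ∀ i, g i z₀ < 0 := fun i => hz₀g i
      have hterm : ∀ i, 0 ≤ Y i * g i z₀ :=
        fun i => by nlinarith [hYneg i, (hgz₀ i).le]
      have hS0 : 0 ≤ S := Finset.sum_nonneg fun i _ => hterm i
      have hTneg : Tt < 0 := by
        have := hstep 1 one_pos
        nlinarith
      -- but Tt = ∑ Y i with each Y i ≤ 0 gives some Y i₁ < 0
      obtain ⟨i₁, _, hi₁⟩ : ∃ i ∈ Finset.univ, Y i < (0 : ℝ) := by
        by_contra hcon
        push_neg at hcon
        have : (0:ℝ) ≤ Tt := Finset.sum_nonneg fun i hi => hcon i hi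
        linarith
      -- then S > 0 strictly
      have hSpos : 0 < S := by
        have h1 : ∀ i ∈ Finset.univ, (0:ℝ) ≤ Y i * g i z₀ := fun i _ => hterm i
        have h2 : 0 < Y i₁ * g i₁ z₀ := mul_pos_of_neg_of_neg hi₁ (hgz₀ i₁)
        calc (0:ℝ) < Y i₁ * g i₁ z₀ := h2
          _ ≤ S := Finset.single_le_sum h1 (Finset.mem_univ i₁)
      -- contradiction: for tiny ε, S + Tt*ε stays positive but must be < c ≤ 0
      have := hstep (S / (2 * (-Tt))) (div_pos hSpos (by linarith))
      have hTtne : Tt ≠ 0 := ne_of_lt hTneg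
      have hcalc : Tt * (S / (2 * (-Tt))) = -(S/2) := by
        field_simp
      rw [hcalc] at this
      linarith
    · exact h
  refine ⟨fun i => (-Y i) / γ, fun i => div_nonneg (neg_nonneg.2 (hYneg i)) hγpos.le, ?_⟩
  intro z hz
  have h1 := hlimit z hz
  set S := ∑ i, Y i * g i z with hSdef
  have h3 : ∑ i, ((-Y i) / γ) * g i z = -S / γ := by
    calc ∑ i, ((-Y i) / γ) * g i z = ∑ i, -(Y i * g i z) / γ :=
          Finset.sum_congr rfl fun i _ => by ring
      _ = (∑ i, -(Y i * g i z)) / γ := by rw [← Finset.sum_div]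
      _ = (-S) / γ := by rw [hSdef, Finset.sum_neg_distrib]
  have hgoal : S ≤ (Dv - f z) * γ := by nlinarith
  have h4 : -S / γ ≥ -((Dv - f z)) := by
    rw [ge_iff_le, le_div_iff₀ hγpos]
    nlinarith
  calc f z - ∑ i, ((-Y i) / γ) * ((∑ s, Gm i s * z s) + gc i)
      = f z - ∑ i, ((-Y i) / γ) * g i z := rfl
    _ = f z - (-S / γ) := by rw [h3]
    _ ≤ f z + (Dv - f z) := by
        have : -S / γ ≥ f z - Dv := by linarith [h4]
        linarith
    _ = Dv := by ring

lemma sum_single_ite {G : Type*} [Fintype G] [DecidableEq G] (f : G → ℝ) (j₀ : G) (t : ℝ) :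
    ∑ j, f j * (if j = j₀ then t else 0) = f j₀ * t := by
  rw [Finset.sum_congr rfl (fun j _ => show f j * (if j = j₀ then t else 0)
    = if j = j₀ then f j * t else 0 from by split_ifs <;> ring)]
  rw [Finset.sum_ite_eq' Finset.univ j₀ (fun j => f j * t)]
  simp

lemma inner_pair_ite {C : Type*} [Fintype C] [DecidableEq C] (w : C → ℝ) (P : Prop)
    [Decidable P] (k₀ : C) (t : ℝ) :
    ∑ k, w k * (if P ∧ k = k₀ then t else 0) = if P then w k₀ * t else 0 := by
  split_ifs with h
  · simp only [h, true_and]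
    exact sum_single_ite w k₀ t
  · refine Finset.sum_eq_zero fun k _ => ?_
    rw [if_neg (fun hc => h hc.1), mul_zero]

lemma sum_pair_ite {A C : Type*} [Fintype A] [Fintype C] [DecidableEq A] [DecidableEq C]
    (f : A → C → ℝ) (i₀ : A) (k₀ : C) (t : ℝ) :
    ∑ i, ∑ k, f i k * (if i = i₀ ∧ k = k₀ then t else 0) = f i₀ k₀ * t := by
  rw [Finset.sum_congr rfl (fun i _ => inner_pair_ite (f i) (i = i₀) k₀ t)]
  rw [Finset.sum_ite_eq' Finset.univ i₀ (fun i => f i k₀ * t)]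
  simp

lemma sum_ite_outer {A G : Type*} [Fintype A] [Fintype G] [DecidableEq A]
    (f : A → G → ℝ) (i₀ : A) :
    ∑ i, ∑ j, (if i = i₀ then f i j else 0) = ∑ j, f i₀ j := by
  rw [Finset.sum_congr rfl (fun i _ => show (∑ j, if i = i₀ then f i j else 0)
    = if i = i₀ then ∑ j, f i j else 0 from by split_ifs <;> simp)]
  rw [Finset.sum_ite_eq' Finset.univ i₀ (fun i => ∑ j, f i j)]
  simp





theorem stmt_12 {A G C : Type*} [Fintype A] [Fintype G] [Fintype C]
    (lam : A → ℝ) (d : A → G → ℝ) (aC : A → G → C → ℝ) (r : A → C → ℝ)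
    (m : A → ℝ) (x : A → G → ℝ) (α : A → C → ℝ) (p : G → ℝ)
    (hlam : ∀ i, 0 < lam i)
    -- X is feasible for LP(λ)
    (hx : ∀ i j, 0 ≤ x i j)
    (hfeas1 : ∀ i k, r i k ≤ ∑ j, aC i j k * x i j)
    (hfeas2 : ∀ j, ∑ i, x i j ≤ 1)
    -- X is optimal for LP(λ)
    (hopt : ∀ y : A → G → ℝ, (∀ i j, 0 ≤ y i j) →
        (∀ i k, r i k ≤ ∑ j, aC i j k * y i j) → (∀ j, ∑ i, y i j ≤ 1) →
        ∑ i, lam i * ∑ j, d i j * x i j ≤ ∑ i, lam i * ∑ j, d i j * y i j)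
    -- (α, p) is feasible for DLP(λ)
    (hα : ∀ i k, 0 ≤ α i k) (hp : ∀ j, 0 ≤ p j)
    (hdfeas : ∀ i j, ∑ k, aC i j k * α i k - p j ≤ lam i * d i j)
    -- (α, p) is optimal for DLP(λ)
    (hdopt : ∀ (α' : A → C → ℝ) (p' : G → ℝ), (∀ i k, 0 ≤ α' i k) →
        (∀ j, 0 ≤ p' j) →
        (∀ i j, ∑ k, aC i j k * α' i k - p' j ≤ lam i * d i j) →
        (∑ i, ∑ k, r i k * α' i k) - ∑ j, p' j
          ≤ (∑ i, ∑ k, r i k * α i k) - ∑ j, p j)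
    -- every agent spends exactly her budget
    (hbudget : ∀ i, ∑ j, p j * x i j = m i) :
    -- (X, p) is a market equilibrium
    (∀ i, ∀ y : G → ℝ, (∀ j, 0 ≤ y j) → (∀ k, r i k ≤ ∑ j, aC i j k * y j) →
        (∑ j, p j * y j ≤ m i) → ∑ j, d i j * x i j ≤ ∑ j, d i j * y j)
    ∧ (∀ j, ∑ i, x i j ≤ 1)
    ∧ (∀ j, ∑ i, x i j < 1 → p j = 0) := by   classical
  set Dv : ℝ := (∑ i, ∑ k, r i k * α i k) - ∑ j, p j with hDvdef
  -- the matrix of the dual LP, in the format of `lagrange`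
  set Gm : A × G → ((A × C) ⊕ G) → ℝ := fun ij =>
    Sum.elim (fun ik : A × C => if ik.1 = ij.1 then aC ij.1 ij.2 ik.2 else 0)
      (fun j' : G => if j' = ij.2 then (-1 : ℝ) else 0) with hGmdef
  set gc : A × G → ℝ := fun ij => -(lam ij.1 * d ij.1 ij.2) with hgcdef
  set cv : ((A × C) ⊕ G) → ℝ :=
    Sum.elim (fun ik : A × C => r ik.1 ik.2) (fun _ : G => (-1 : ℝ)) with hcvdef
  -- translation of the constraint rows
  have htrans : ∀ (za : A → C → ℝ) (zp : G → ℝ) (i : A) (j : G),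
      (∑ s : (A × C) ⊕ G, Gm (i, j) s * (Sum.elim (fun ik : A × C => za ik.1 ik.2) zp) s)
        = (∑ k, aC i j k * za i k) - zp j := by
    intro za zp i j
    rw [Fintype.sum_sum_type]
    have h1 : (∑ ik : A × C, Gm (i, j) (Sum.inl ik)
        * (Sum.elim (fun ik : A × C => za ik.1 ik.2) zp) (Sum.inl ik))
        = ∑ k, aC i j k * za i k := by
      rw [Fintype.sum_prod_type]
      have hinner : ∀ i' : A, (∑ k, (if i' = i then aC i j k else 0) * za i' k)
          = if i' = i then ∑ k, aC i j k * za i k else 0 := by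
        intro i'
        split_ifs with h
        · subst h; rfl
        · simp
      calc (∑ i' : A, ∑ k, Gm (i, j) (Sum.inl (i', k))
            * (Sum.elim (fun ik : A × C => za ik.1 ik.2) zp) (Sum.inl (i', k)))
          = ∑ i' : A, ∑ k, (if i' = i then aC i j k else 0) * za i' k := rfl
        _ = ∑ i' : A, if i' = i then ∑ k, aC i j k * za i k else 0 :=
            Finset.sum_congr rfl fun i' _ => hinner i'
        _ = ∑ k, aC i j k * za i k := by
            rw [Finset.sum_ite_eq' Finset.univ i (fun _ => ∑ k, aC i j k * za i k)]
            simp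
    have h2 : (∑ j' : G, Gm (i, j) (Sum.inr j')
        * (Sum.elim (fun ik : A × C => za ik.1 ik.2) zp) (Sum.inr j')) = -zp j := by
      calc (∑ j' : G, Gm (i, j) (Sum.inr j')
            * (Sum.elim (fun ik : A × C => za ik.1 ik.2) zp) (Sum.inr j'))
          = ∑ j' : G, (if j' = j then (-1:ℝ) else 0) * zp j' := rfl
        _ = ∑ j' : G, if j' = j then -zp j' else 0 := by
            refine Finset.sum_congr rfl fun j' _ => ?_
            split_ifs <;> ring
        _ = -zp j := by
            rw [Finset.sum_ite_eq' Finset.univ j (fun j' => -zp j')]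
            simp
    rw [h1, h2]
    ring
  -- translation of the objective row
  have hobj : ∀ (za : A → C → ℝ) (zp : G → ℝ),
      (∑ s : (A × C) ⊕ G, cv s * (Sum.elim (fun ik : A × C => za ik.1 ik.2) zp) s)
        = (∑ i, ∑ k, r i k * za i k) - ∑ j, zp j := by
    intro za zp
    rw [Fintype.sum_sum_type]
    have h1 : (∑ ik : A × C, cv (Sum.inl ik)
        * (Sum.elim (fun ik : A × C => za ik.1 ik.2) zp) (Sum.inl ik))
        = ∑ i, ∑ k, r i k * za i k := by
      rw [Fintype.sum_prod_type]; rfl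
    have h2 : (∑ j : G, cv (Sum.inr j)
        * (Sum.elim (fun ik : A × C => za ik.1 ik.2) zp) (Sum.inr j)) = -∑ j, zp j := by
      simp [hcvdef]
    rw [h1, h2]
    ring
  -- Slater point for the dual constraints
  set zp0 : G → ℝ := fun j => 1 + ∑ i, |lam i * d i j| with hzp0def
  obtain ⟨Y, hY0, hYle⟩ := lagrange Gm gc cv Dv
    (by
      intro z hz hcon
      set za : A → C → ℝ := fun i k => z (Sum.inl (i, k)) with hzadef
      set zp : G → ℝ := fun j => z (Sum.inr j) with hzpdef
      have hz_eq : z = Sum.elim (fun ik : A × C => za ik.1 ik.2) zp := by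
        funext s
        rcases s with ⟨i, k⟩ | j <;> rfl
      rw [hz_eq, hobj za zp]
      apply hdopt _ _ (fun i k => hz (Sum.inl (i, k))) (fun j => hz (Sum.inr j))
      intro i j
      have := hcon (i, j)
      rw [hz_eq, htrans] at this
      simp only [hgcdef] at this
      linarith
    )
    (Sum.elim (fun _ : A × C => (0:ℝ)) zp0)
    (by
      rintro (⟨i, k⟩ | j)
      · exact le_refl 0
      · show (0:ℝ) ≤ 1 + ∑ i, |lam i * d i j|
        positivity
    )
    (by
      rintro ⟨i, j⟩
      have habs : |lam i * d i j| ≤ ∑ i', |lam i' * d i' j| :=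
        Finset.single_le_sum (f := fun i' => |lam i' * d i' j|)
          (fun i' _ => abs_nonneg _) (Finset.mem_univ i)
      have hle : -(lam i * d i j) ≤ |lam i * d i j| := neg_le_abs _
      have heq : (∑ s : (A × C) ⊕ G, Gm (i, j) s
          * (Sum.elim (fun _ : A × C => (0:ℝ)) zp0) s)
          = (∑ k, aC i j k * (0:ℝ)) - zp0 j := htrans (fun _ _ => 0) zp0 i j
      rw [heq]
      simp only [hgcdef, hzp0def, mul_zero, Finset.sum_const_zero]
      linarith
    )
  set yq : A → G → ℝ := fun i j => Y (i, j) with hyqdef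
  -- the usable form of the Lagrangian bound
  have key : ∀ (α' : A → C → ℝ) (p' : G → ℝ), (∀ i k, 0 ≤ α' i k) → (∀ j, 0 ≤ p' j) →
      ((∑ i, ∑ k, r i k * α' i k) - ∑ j, p' j)
        - ∑ i, ∑ j, yq i j * ((∑ k, aC i j k * α' i k) - p' j - lam i * d i j) ≤ Dv := by
    intro α' p' hα' hp'
    have h := hYle (Sum.elim (fun ik : A × C => α' ik.1 ik.2) p')
      (by rintro (⟨i, k⟩ | j); exacts [hα' i k, hp' j])
    rw [hobj] at h
    have h2 : (∑ ij : A × G, Y ij * ((∑ s, Gm ij s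
        * (Sum.elim (fun ik : A × C => α' ik.1 ik.2) p') s) + gc ij))
        = ∑ i, ∑ j, yq i j * ((∑ k, aC i j k * α' i k) - p' j - lam i * d i j) := by
      rw [Fintype.sum_prod_type]
      refine Finset.sum_congr rfl fun i _ => Finset.sum_congr rfl fun j _ => ?_
      rw [htrans]
      simp only [hgcdef, hyqdef]
      ring_nf
    rw [h2] at h
    exact h
  -- base value of the Lagrangian
  have K0 : ∑ i, ∑ j, yq i j * (lam i * d i j) ≤ Dv := by
    have h := key (fun _ _ => 0) (fun _ => 0) (fun _ _ => le_refl 0) (fun _ => le_refl 0)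
    have h' : ((∑ i, ∑ k, r i k * (0:ℝ)) - ∑ _j : G, (0:ℝ))
        - ∑ i, ∑ j, yq i j * ((∑ k, aC i j k * (0:ℝ)) - 0 - lam i * d i j) ≤ Dv := h
    have h2 : ((∑ i, ∑ k, r i k * (0:ℝ)) - ∑ _j : G, (0:ℝ))
        - ∑ i, ∑ j, yq i j * ((∑ k, aC i j k * (0:ℝ)) - 0 - lam i * d i j)
        = ∑ i, ∑ j, yq i j * (lam i * d i j) := by
      have e : ∀ i j, yq i j * ((∑ k, aC i j k * (0:ℝ)) - 0 - lam i * d i j)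
          = -(yq i j * (lam i * d i j)) := fun i j => by simp
      rw [Finset.sum_congr rfl fun i _ => Finset.sum_congr rfl fun j _ => e i j]
      rw [Finset.sum_congr rfl fun (i : A) _ => Finset.sum_neg_distrib
        (f := fun j => yq i j * (lam i * d i j)), Finset.sum_neg_distrib]
      simp
    rw [h2] at h'
    exact h'
  -- yq covers the requirements
  have cover : ∀ i₀ k₀, r i₀ k₀ ≤ ∑ j, aC i₀ j k₀ * yq i₀ j := by
    intro i₀ k₀
    have hray : ∀ t : ℝ, 0 < t → (∑ i, ∑ j, yq i j * (lam i * d i j))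
        + t * (r i₀ k₀ - ∑ j, aC i₀ j k₀ * yq i₀ j) ≤ Dv := by
      intro t ht
      have h := key (fun i k => if i = i₀ ∧ k = k₀ then t else 0) (fun _ => 0)
        (fun i k => by split_ifs <;> [exact ht.le; exact le_refl 0])
        (fun _ => le_refl 0)
      have h' : ((∑ i, ∑ k, r i k * (if i = i₀ ∧ k = k₀ then t else 0)) - ∑ _j : G, (0:ℝ))
          - ∑ i, ∑ j, yq i j * ((∑ k, aC i j k * (if i = i₀ ∧ k = k₀ then t else 0))
            - 0 - lam i * d i j) ≤ Dv := h
      have e1 : (∑ i, ∑ k, r i k * (if i = i₀ ∧ k = k₀ then t else 0)) = r i₀ k₀ * t :=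
        sum_pair_ite r i₀ k₀ t
      have e3 : ∑ i, ∑ j, yq i j * ((∑ k, aC i j k * (if i = i₀ ∧ k = k₀ then t else 0))
            - 0 - lam i * d i j)
          = t * (∑ j, aC i₀ j k₀ * yq i₀ j) - ∑ i, ∑ j, yq i j * (lam i * d i j) := by
        have step1 : ∀ i j, yq i j * ((∑ k, aC i j k * (if i = i₀ ∧ k = k₀ then t else 0))
              - 0 - lam i * d i j)
            = (if i = i₀ then yq i j * (aC i j k₀ * t) else 0) - yq i j * (lam i * d i j) := by
          intro i j
          rw [inner_pair_ite (aC i j) (i = i₀) k₀ t]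
          split_ifs <;> ring
        rw [Finset.sum_congr rfl fun i _ => Finset.sum_congr rfl fun j _ => step1 i j]
        rw [Finset.sum_congr rfl fun i _ => Finset.sum_sub_distrib _ _, Finset.sum_sub_distrib]
        rw [sum_ite_outer (fun i j => yq i j * (aC i j k₀ * t)) i₀]
        congr 1
        rw [Finset.mul_sum]
        exact Finset.sum_congr rfl fun j _ => by ring
      rw [e1, e3] at h'
      have hz : (∑ _j : G, (0:ℝ)) = 0 := Finset.sum_const_zero
      rw [hz] at h'
      calc (∑ i, ∑ j, yq i j * (lam i * d i j))
            + t * (r i₀ k₀ - ∑ j, aC i₀ j k₀ * yq i₀ j)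
          = (r i₀ k₀ * t - 0) - (t * (∑ j, aC i₀ j k₀ * yq i₀ j)
              - ∑ i, ∑ j, yq i j * (lam i * d i j)) := by ring
        _ ≤ Dv := h'
    have := aux_ray hray
    linarith
  -- yq respects supplies
  have supply : ∀ j₀, ∑ i, yq i j₀ ≤ 1 := by
    intro j₀
    have hray : ∀ t : ℝ, 0 < t → (∑ i, ∑ j, yq i j * (lam i * d i j))
        + t * ((∑ i, yq i j₀) - 1) ≤ Dv := by
      intro t ht
      have h := key (fun _ _ => 0) (fun j => if j = j₀ then t else 0)
        (fun _ _ => le_refl 0)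
        (fun j => by split_ifs <;> [exact ht.le; exact le_refl 0])
      have h' : ((∑ i, ∑ k, r i k * (0:ℝ)) - ∑ j, (if j = j₀ then t else 0))
          - ∑ i, ∑ j, yq i j * ((∑ k, aC i j k * (0:ℝ))
            - (if j = j₀ then t else 0) - lam i * d i j) ≤ Dv := h
      have e1 : (∑ j, (if j = j₀ then t else (0:ℝ))) = t := by
        rw [Finset.sum_ite_eq' Finset.univ j₀ (fun _ => t)]
        simp
      have e3 : ∑ i, ∑ j, yq i j * ((∑ k, aC i j k * (0:ℝ))
            - (if j = j₀ then t else 0) - lam i * d i j)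
          = -((∑ i, yq i j₀) * t) - ∑ i, ∑ j, yq i j * (lam i * d i j) := by
        have step1 : ∀ i j, yq i j * ((∑ k, aC i j k * (0:ℝ))
              - (if j = j₀ then t else 0) - lam i * d i j)
            = -(yq i j * (if j = j₀ then t else 0)) - yq i j * (lam i * d i j) := by
          intro i j
          rw [show (∑ k, aC i j k * (0:ℝ)) = 0 by simp]
          ring
        rw [Finset.sum_congr rfl fun i _ => Finset.sum_congr rfl fun j _ => step1 i j]
        rw [Finset.sum_congr rfl fun i _ => Finset.sum_sub_distrib _ _, Finset.sum_sub_distrib]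
        congr 1
        rw [Finset.sum_congr rfl fun i _ => (Finset.sum_neg_distrib (f := fun j =>
          yq i j * (if j = j₀ then t else 0))), Finset.sum_neg_distrib]
        rw [Finset.sum_congr rfl fun i _ => sum_single_ite (yq i) j₀ t, Finset.sum_mul]
      rw [e1, e3] at h'
      have hz : (∑ i : A, ∑ k : C, r i k * (0:ℝ)) = 0 := by simp
      rw [hz] at h'
      calc (∑ i, ∑ j, yq i j * (lam i * d i j)) + t * ((∑ i, yq i j₀) - 1)
          = (0 - t) - (-((∑ i, yq i j₀) * t)
              - ∑ i, ∑ j, yq i j * (lam i * d i j)) := by ring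
        _ ≤ Dv := h'
    have := aux_ray hray
    linarith
  have hyq0 : ∀ i j, 0 ≤ yq i j := fun i j => hY0 (i, j)
  -- strong duality: the primal optimum equals the dual optimum
  set Pv : ℝ := ∑ i, lam i * ∑ j, d i j * x i j with hPvdef
  have hPle : Pv ≤ Dv := by
    have h1 := hopt yq hyq0 cover supply
    have h2 : ∑ i, lam i * ∑ j, d i j * yq i j = ∑ i, ∑ j, yq i j * (lam i * d i j) := by
      refine Finset.sum_congr rfl fun i _ => ?_
      rw [Finset.mul_sum]
      exact Finset.sum_congr rfl fun j _ => by ring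
    rw [h2] at h1
    linarith
  have swap1 : ∀ i, ∑ k, α i k * (∑ j, aC i j k * x i j)
      = ∑ j, x i j * (∑ k, aC i j k * α i k) :=
    fun i => sum_swap_mul (α i) (x i) (fun j k => aC i j k)
  have swap2 : ∑ j, p j * ∑ i, x i j = ∑ i, ∑ j, x i j * p j := by
    calc ∑ j, p j * ∑ i, x i j = ∑ j, ∑ i, p j * x i j := by
          exact Finset.sum_congr rfl fun j _ => Finset.mul_sum _ _ _
      _ = ∑ i, ∑ j, p j * x i j := Finset.sum_comm
      _ = ∑ i, ∑ j, x i j * p j :=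
          Finset.sum_congr rfl fun i _ => Finset.sum_congr rfl fun j _ => mul_comm _ _
  have ePv : Pv = ∑ i, ∑ j, x i j * (lam i * d i j) := by
    rw [hPvdef]
    refine Finset.sum_congr rfl fun i _ => ?_
    rw [Finset.mul_sum]
    exact Finset.sum_congr rfl fun j _ => by ring
  have eR : ∑ i, ∑ k, r i k * α i k = ∑ i, ∑ k, α i k * r i k :=
    Finset.sum_congr rfl fun i _ => Finset.sum_congr rfl fun k _ => mul_comm _ _
  have hweak : Dv ≤ Pv := by
    have H1 : ∑ i, ∑ k, r i k * α i k ≤ ∑ i, ∑ j, x i j * (∑ k, aC i j k * α i k) := by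
      refine Finset.sum_le_sum fun i _ => ?_
      rw [← swap1 i]
      refine Finset.sum_le_sum fun k _ => ?_
      calc r i k * α i k = α i k * r i k := mul_comm _ _
        _ ≤ α i k * (∑ j, aC i j k * x i j) :=
            mul_le_mul_of_nonneg_left (hfeas1 i k) (hα i k)
    have H3 : ∑ i, ∑ j, x i j * (∑ k, aC i j k * α i k)
        ≤ ∑ i, ∑ j, x i j * (lam i * d i j + p j) := by
      refine Finset.sum_le_sum fun i _ => Finset.sum_le_sum fun j _ => ?_
      exact mul_le_mul_of_nonneg_left (by linarith [hdfeas i j]) (hx i j)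
    have H4 : ∑ i, ∑ j, x i j * (lam i * d i j + p j)
        = Pv + ∑ j, p j * ∑ i, x i j := by
      rw [ePv, swap2, ← Finset.sum_add_distrib]
      refine Finset.sum_congr rfl fun i _ => ?_
      rw [← Finset.sum_add_distrib]
      exact Finset.sum_congr rfl fun j _ => by ring
    have H5 : ∑ j, p j * ∑ i, x i j ≤ ∑ j, p j := by
      refine Finset.sum_le_sum fun j _ => ?_
      calc p j * ∑ i, x i j ≤ p j * 1 := mul_le_mul_of_nonneg_left (hfeas2 j) (hp j)
        _ = p j := mul_one _
    rw [hDvdef]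
    linarith
  have hPD : Pv = Dv := le_antisymm hPle hweak
  -- complementary slackness
  have eA : ∀ i, ∑ k, α i k * ((∑ j, aC i j k * x i j) - r i k)
      = (∑ j, x i j * (∑ k, aC i j k * α i k)) - ∑ k, α i k * r i k := by
    intro i
    rw [← swap1 i, ← Finset.sum_sub_distrib]
    exact Finset.sum_congr rfl fun k _ => by ring
  have eB : ∀ i, ∑ j, x i j * (lam i * d i j + p j - ∑ k, aC i j k * α i k)
      = ((∑ j, x i j * (lam i * d i j)) + ∑ j, x i j * p j)
        - ∑ j, x i j * (∑ k, aC i j k * α i k) := by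
    intro i
    rw [← Finset.sum_add_distrib, ← Finset.sum_sub_distrib]
    exact Finset.sum_congr rfl fun j _ => by ring
  have eC : ∑ j, p j * (1 - ∑ i, x i j) = (∑ j, p j) - ∑ j, p j * ∑ i, x i j := by
    rw [← Finset.sum_sub_distrib]
    exact Finset.sum_congr rfl fun j _ => by ring
  have hsum0 : (∑ i, ∑ k, α i k * ((∑ j, aC i j k * x i j) - r i k))
      + (∑ i, ∑ j, x i j * (lam i * d i j + p j - ∑ k, aC i j k * α i k))
      + (∑ j, p j * (1 - ∑ i, x i j)) = 0 := by
    rw [Finset.sum_congr rfl fun i _ => eA i, Finset.sum_congr rfl fun i _ => eB i, eC]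
    rw [Finset.sum_sub_distrib, Finset.sum_sub_distrib, Finset.sum_add_distrib]
    have hDv' : Dv = (∑ i, ∑ k, α i k * r i k) - ∑ j, p j := by rw [hDvdef, eR]
    rw [swap2] at *
    linarith [hPD, ePv, hDv']
  have hA0 : ∀ i k, 0 ≤ α i k * ((∑ j, aC i j k * x i j) - r i k) :=
    fun i k => mul_nonneg (hα i k) (by linarith [hfeas1 i k])
  have hB0 : ∀ i j, 0 ≤ x i j * (lam i * d i j + p j - ∑ k, aC i j k * α i k) :=
    fun i j => mul_nonneg (hx i j) (by linarith [hdfeas i j])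
  have hC0 : ∀ j, 0 ≤ p j * (1 - ∑ i, x i j) :=
    fun j => mul_nonneg (hp j) (by linarith [hfeas2 j])
  have hAs : (0:ℝ) ≤ ∑ i, ∑ k, α i k * ((∑ j, aC i j k * x i j) - r i k) :=
    Finset.sum_nonneg fun i _ => Finset.sum_nonneg fun k _ => hA0 i k
  have hBs : (0:ℝ) ≤ ∑ i, ∑ j, x i j * (lam i * d i j + p j - ∑ k, aC i j k * α i k) :=
    Finset.sum_nonneg fun i _ => Finset.sum_nonneg fun j _ => hB0 i j
  have hCs : (0:ℝ) ≤ ∑ j, p j * (1 - ∑ i, x i j) :=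
    Finset.sum_nonneg fun j _ => hC0 j
  have hAz : ∑ i, ∑ k, α i k * ((∑ j, aC i j k * x i j) - r i k) = 0 := by linarith
  have hBz : ∑ i, ∑ j, x i j * (lam i * d i j + p j - ∑ k, aC i j k * α i k) = 0 := by linarith
  have hCz : ∑ j, p j * (1 - ∑ i, x i j) = 0 := by linarith
  have hCterm : ∀ j, p j * (1 - ∑ i, x i j) = 0 := fun j =>
    (Finset.sum_eq_zero_iff_of_nonneg (fun j _ => hC0 j)).mp hCz j (Finset.mem_univ j)
  have hAterm : ∀ i k, α i k * ((∑ j, aC i j k * x i j) - r i k) = 0 := by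
    intro i k
    have h1 := (Finset.sum_eq_zero_iff_of_nonneg
      (fun i _ => Finset.sum_nonneg fun k _ => hA0 i k)).mp hAz i (Finset.mem_univ i)
    exact (Finset.sum_eq_zero_iff_of_nonneg (fun k _ => hA0 i k)).mp h1 k (Finset.mem_univ k)
  have hBterm : ∀ i j, x i j * (lam i * d i j + p j - ∑ k, aC i j k * α i k) = 0 := by
    intro i j
    have h1 := (Finset.sum_eq_zero_iff_of_nonneg
      (fun i _ => Finset.sum_nonneg fun j _ => hB0 i j)).mp hBz i (Finset.mem_univ i)
    exact (Finset.sum_eq_zero_iff_of_nonneg (fun j _ => hB0 i j)).mp h1 j (Finset.mem_univ j)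
  refine ⟨?_, hfeas2, ?_⟩
  · -- agent optimality
    intro i y hy hycov hybud
    have hx2 : ∑ j, x i j * p j = m i := by
      rw [← hbudget i]
      exact Finset.sum_congr rfl fun j _ => mul_comm _ _
    have hx1 : ∑ j, x i j * (lam i * d i j)
        = (∑ j, x i j * (∑ k, aC i j k * α i k)) - ∑ j, x i j * p j := by
      rw [← Finset.sum_sub_distrib]
      refine Finset.sum_congr rfl fun j _ => ?_
      linear_combination hBterm i j
    have hx4 : ∑ j, x i j * (∑ k, aC i j k * α i k) = ∑ k, α i k * r i k := by
      rw [← swap1 i]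
      refine Finset.sum_congr rfl fun k _ => ?_
      linear_combination hAterm i k
    have hxval : lam i * ∑ j, d i j * x i j = (∑ k, α i k * r i k) - m i := by
      have e : lam i * ∑ j, d i j * x i j = ∑ j, x i j * (lam i * d i j) := by
        rw [Finset.mul_sum]
        exact Finset.sum_congr rfl fun j _ => by ring
      rw [e, hx1, hx4, hx2]
    have hy1 : ∑ k, α i k * r i k ≤ ∑ k, α i k * (∑ j, aC i j k * y j) :=
      Finset.sum_le_sum fun k _ => mul_le_mul_of_nonneg_left (hycov k) (hα i k)
    have hy2 : ∑ k, α i k * (∑ j, aC i j k * y j) = ∑ j, y j * (∑ k, aC i j k * α i k) :=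
      sum_swap_mul (α i) y (fun j k => aC i j k)
    have hy3 : ∑ j, y j * (∑ k, aC i j k * α i k) ≤ ∑ j, y j * (lam i * d i j + p j) :=
      Finset.sum_le_sum fun j _ =>
        mul_le_mul_of_nonneg_left (by linarith [hdfeas i j]) (hy j)
    have hy4 : ∑ j, y j * (lam i * d i j + p j)
        = lam i * (∑ j, d i j * y j) + ∑ j, p j * y j := by
      rw [Finset.mul_sum, ← Finset.sum_add_distrib]
      exact Finset.sum_congr rfl fun j _ => by ring
    have hcomp : lam i * ∑ j, d i j * x i j ≤ lam i * ∑ j, d i j * y j := by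
      rw [hxval]
      have : ∑ j, p j * y j ≤ m i := hybud
      linarith [hy1, hy2 ▸ hy1, hy3, hy4]
    exact le_of_mul_le_mul_left hcomp (hlam i)
  · -- unsold goods are priced zero
    intro j hj
    rcases mul_eq_zero.mp (hCterm j) with h | h
    · exact h
    · exfalso; linarith
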